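/- Cauchy integral representation of φ_ℓ on a circle: for an N×N complex matrix L whose eigenvalues all lie strictly inside a circle Γ of radius R centered at c (with Γ not passing through any eigenvalue), φ_ℓ(L) = (1/(2πi)) ∮_Γ φ_ℓ(s)(sI - L)^{-1} ds, where φ_ℓ(s) = ∑_{i=0}^∞ s^i/(i+ℓ)!. -/

import Mathlib

/-!
Expanding `φ_ℓ(z) = ∑ z^k/(k+ℓ)!` under the integral (the series converges uniformly on the
circle) reduces the claim to `∮ z^k (z - L)⁻¹ dz = 2πi L^k`. Since `z (z - L)⁻¹ = 1 + L (z - L)⁻¹`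
and `∮ z^k dz = 0`, this follows by induction from the case `k = 0`. There, all eigenvalues of
`L - c` lie in the open disc of radius `R`, so by Gelfand's formula `‖(L - c)^m‖ ≤ C r^m` for some
`r < R`; hence the Neumann series `(z - L)⁻¹ = ∑ (L - c)^m / (z - c)^(m+1)` converges uniformly on
the circle, and only its term `m = 0` has a nonzero integral, namely `2πi`.
-/

open scoped Nat Real
open Matrix

attribute [local instance] Matrix.normedAddCommGroup Matrix.normedSpace

/-- `φ_ℓ` as an entire function: `φ_ℓ(s) = ∑_{i=0}^∞ s^i/(i+ℓ)!`. -/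
noncomputable def phiC (ℓ : ℕ) (s : ℂ) : ℂ := ∑' i : ℕ, s ^ i / ((i + ℓ)! : ℂ)

/-- `φ_ℓ(L) = ∑_{i=0}^∞ L^i/(i+ℓ)!` for a square complex matrix `L`. -/
noncomputable def phiMat {N : ℕ} (ℓ : ℕ) (L : Matrix (Fin N) (Fin N) ℂ) :
    Matrix (Fin N) (Fin N) ℂ :=
  ∑' i : ℕ, (((i + ℓ)! : ℂ)⁻¹) • L ^ i

open Filter Metric

namespace spectrum

theorem spectralRadius_lt_of_forall_nnnorm_lt {𝕜 A : Type*} [NormedField 𝕜] [ProperSpace 𝕜]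
    [NormedRing A] [NormedAlgebra 𝕜 A] [CompleteSpace A] {a : A} {R : NNReal} (hR : 0 < R)
    (h : ∀ μ ∈ spectrum 𝕜 a, ‖μ‖₊ < R) : spectralRadius 𝕜 a < R := by
  rcases (spectrum 𝕜 a).eq_empty_or_nonempty with he | hne
  · simpa [spectralRadius, he] using hR
  · exact spectralRadius_lt_of_forall_lt_of_nonempty hne h

theorem sphere_subset_resolventSet {A : Type*} [Ring A] [Algebra ℂ A] {a : A} {c : ℂ} {R : ℝ}
    (h : ∀ μ ∈ spectrum ℂ a, ‖μ - c‖ < R) : sphere c R ⊆ resolventSet ℂ a :=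
  fun z hz => Set.notMem_compl_iff.1 fun hz' => (h z hz').ne (mem_sphere_iff_norm.1 hz)

theorem exists_norm_pow_le_of_forall_norm_lt {A : Type*} [NormedRing A] [NormedAlgebra ℂ A]
    [CompleteSpace A] {a : A} {R : ℝ} (hR : 0 < R)
    (h : ∀ μ ∈ spectrum ℂ a, ‖μ‖ < R) :
    ∃ r C : ℝ, 0 ≤ r ∧ r < R ∧ 0 ≤ C ∧ ∀ n : ℕ, ‖a ^ n‖ ≤ C * r ^ n := by
  have hρ : spectralRadius ℂ a < R.toNNReal :=
    spectralRadius_lt_of_forall_nnnorm_lt (Real.toNNReal_pos.2 hR) fun μ hμ =>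
      Real.lt_toNNReal_iff_coe_lt.2 (h μ hμ)
  obtain ⟨r, hρr, hrR⟩ := ENNReal.lt_iff_exists_nnreal_btwn.1 hρ
  have hr : 0 < r := ENNReal.coe_pos.1 (hρr.trans_le' bot_le)
  have hev : ∀ᶠ n : ℕ in atTop, ‖a ^ n‖ / r ^ n ≤ 1 := by
    filter_upwards [(pow_nnnorm_pow_one_div_tendsto_nhds_spectralRadius a).eventually_lt_const hρr,
      eventually_gt_atTop 0] with n hn hn0
    rw [one_div, ENNReal.rpow_inv_lt_iff (by positivity), ENNReal.rpow_natCast] at hn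
    rw [div_le_one (by positivity)]
    exact_mod_cast hn.le
  obtain ⟨C, hC⟩ := (isBoundedUnder_of_eventually_le hev).bddAbove_range
  refine ⟨r, C, r.2, Real.lt_toNNReal_iff_coe_lt.1 (ENNReal.coe_lt_coe.1 hrR),
    (div_nonneg (norm_nonneg _) (by positivity)).trans (hC ⟨0, rfl⟩), fun n => ?_⟩
  rw [← div_le_iff₀ (by positivity)]
  exact hC ⟨n, rfl⟩

end spectrum

theorem ContinuousLinearMap.circleIntegral_comp_comm {E F : Type*} [NormedAddCommGroup E]
    [NormedSpace ℂ E] [CompleteSpace E] [NormedAddCommGroup F] [NormedSpace ℂ F] [CompleteSpace F]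
    (T : E →L[ℂ] F) {f : ℂ → E} {c : ℂ} {R : ℝ} (hf : CircleIntegrable f c R) :
    ∮ z in C(c, R), T (f z) = T (∮ z in C(c, R), f z) := by
  simp only [circleIntegral, ← T.map_smul]
  exact T.intervalIntegral_comp_comm hf.out

theorem circleIntegral.hasSum_integral_of_norm_le {E : Type*} [NormedAddCommGroup E]
    [NormedSpace ℂ E]
    {f : ℕ → ℂ → E} {g : ℂ → E} {c : ℂ} {R : ℝ} {u : ℕ → ℝ} (hR : 0 ≤ R)
    (hf : ∀ k, ContinuousOn (f k) (sphere c R)) (hu : ∀ k, ∀ z ∈ sphere c R, ‖f k z‖ ≤ u k)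
    (hu_sum : Summable u) (hg : ∀ z ∈ sphere c R, HasSum (fun k => f k z) (g z)) :
    HasSum (fun k => ∮ z in C(c, R), f k z) (∮ z in C(c, R), g z) := by
  refine intervalIntegral.hasSum_integral_of_dominated_convergence (fun k _ => R * u k)
    (fun k => ?_) (fun k => ?_) ?_ intervalIntegrable_const ?_
  · have hderiv : Continuous (deriv (circleMap c R)) := by
      simp only [funext (deriv_circleMap c R)]; fun_prop
    exact (hderiv.smul ((hf k).comp_continuous (continuous_circleMap c R)
      (circleMap_mem_sphere c hR))).aestronglyMeasurable
  · refine Eventually.of_forall fun θ _ => ?_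
    rw [norm_smul, deriv_circleMap, norm_mul, norm_circleMap_zero, Complex.norm_I, mul_one,
      abs_of_nonneg hR]
    exact mul_le_mul_of_nonneg_left (hu k _ (circleMap_mem_sphere c hR θ)) hR
  · exact Eventually.of_forall fun θ _ => hu_sum.mul_left _
  · exact Eventually.of_forall fun θ _ => (hg _ (circleMap_mem_sphere c hR θ)).const_smul _

theorem circleIntegral.integral_inv_sub_center_pow_succ (c : ℂ) {R : ℝ} (hR : R ≠ 0) (k : ℕ) :
    ∮ z in C(c, R), ((z - c) ^ (k + 1))⁻¹ = if k = 0 then 2 * π * Complex.I else 0 := by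
  split_ifs with hk
  · simpa [hk] using circleIntegral.integral_sub_center_inv c hR
  · have := circleIntegral.integral_sub_zpow_of_ne (n := -((k + 1 : ℕ) : ℤ)) (by omega) c c R
    simpa only [_root_.zpow_neg, zpow_natCast] using this

theorem circleIntegral.integral_pow (c : ℂ) (R : ℝ) (k : ℕ) : ∮ z in C(c, R), z ^ k = 0 := by
  simpa using circleIntegral.integral_sub_zpow_of_ne (n := (k : ℤ)) (by omega) c 0 R

namespace Matrix

variable {n : Type*} [Fintype n] [DecidableEq n]

section
/- Gelfand's formula needs a submultiplicative norm, so here matrices carry the `ℓ∞` operator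
norm; only the resulting entrywise bound leaves this section. -/
open scoped Matrix.Norms.Operator

theorem exists_norm_entry_pow_le (M : Matrix n n ℂ) {R : ℝ} (hR : 0 < R)
    (h : ∀ μ ∈ spectrum ℂ M, ‖μ‖ < R) :
    ∃ r C : ℝ, 0 ≤ r ∧ r < R ∧ 0 ≤ C ∧ ∀ (k : ℕ) (i j : n), ‖(M ^ k) i j‖ ≤ C * r ^ k := by
  have : CompleteSpace (Matrix n n ℂ) := FiniteDimensional.complete ℂ _
  obtain ⟨r, C, hr, hrR, hC, hM⟩ := spectrum.exists_norm_pow_le_of_forall_norm_lt hR h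
  refine ⟨r, C, hr, hrR, hC, fun k i j => le_trans ?_ (hM k)⟩
  rw [linfty_opNorm_def]
  exact_mod_cast (Finset.single_le_sum (fun j _ => zero_le) (Finset.mem_univ j)).trans
    (Finset.le_sup (f := fun i => ∑ j, ‖(M ^ k) i j‖₊) (Finset.mem_univ i))

end

theorem exists_norm_pow_le (M : Matrix n n ℂ) {R : ℝ} (hR : 0 < R)
    (h : ∀ μ ∈ spectrum ℂ M, ‖μ‖ < R) :
    ∃ r C : ℝ, 0 ≤ r ∧ r < R ∧ 0 ≤ C ∧ ∀ k : ℕ, ‖M ^ k‖ ≤ C * r ^ k := by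
  obtain ⟨r, C, hr, hrR, hC, hM⟩ := exists_norm_entry_pow_le M hR h
  exact ⟨r, C, hr, hrR, hC, fun k => (norm_le_iff (by positivity)).2 (hM k)⟩

theorem norm_inv_pow_succ_smul_pow_le {M : Matrix n n ℂ} {C r : ℝ}
    (hM : ∀ k : ℕ, ‖M ^ k‖ ≤ C * r ^ k) {w : ℂ} (hw : w ≠ 0) (k : ℕ) :
    ‖(w ^ (k + 1))⁻¹ • M ^ k‖ ≤ C / ‖w‖ * (r / ‖w‖) ^ k := by
  have hw' : 0 < ‖w‖ := norm_pos_iff.2 hw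
  rw [norm_smul, norm_inv, norm_pow, div_pow, pow_succ]
  calc (‖w‖ ^ k * ‖w‖)⁻¹ * ‖M ^ k‖ ≤ (‖w‖ ^ k * ‖w‖)⁻¹ * (C * r ^ k) := by gcongr; exact hM k
    _ = C / ‖w‖ * (r ^ k / ‖w‖ ^ k) := by field_simp

theorem hasSum_inv_pow_succ_smul_pow {M : Matrix n n ℂ} {w : ℂ} (hw : w ≠ 0)
    (hs : Summable fun k : ℕ => (w ^ (k + 1))⁻¹ • M ^ k) :
    HasSum (fun k : ℕ => (w ^ (k + 1))⁻¹ • M ^ k) (w • 1 - M)⁻¹ := by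
  obtain ⟨S, hS⟩ := hs
  have hshift : S - w⁻¹ • 1 = w⁻¹ • (M * S) := by
    have htail := (hasSum_nat_add_iff' 1).2 hS
    rw [Finset.sum_range_one, zero_add, pow_one, pow_zero] at htail
    have hterm (k : ℕ) :
        (w ^ (k + 1 + 1))⁻¹ • M ^ (k + 1) = w⁻¹ • (M * ((w ^ (k + 1))⁻¹ • M ^ k)) := by
      rw [mul_smul_comm, smul_smul, ← pow_succ', pow_succ _ (k + 1), mul_inv, mul_comm]
    simp only [hterm] at htail
    exact htail.unique ((hS.mul_left M).const_smul w⁻¹)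
  have hinv : (w • 1 - M) * S = 1 := by
    rw [sub_eq_iff_eq_add', ← smul_add] at hshift
    rw [sub_mul, smul_one_mul, sub_eq_iff_eq_add]
    calc w • S = w • w⁻¹ • (1 + M * S) := congrArg (w • ·) hshift
      _ = 1 + M * S := smul_inv_smul₀ hw _
  rw [inv_eq_right_inv hinv]
  exact hS

theorem continuousOn_inv_smul_one_sub (L : Matrix n n ℂ) :
    ContinuousOn (fun z : ℂ => (z • (1 : Matrix n n ℂ) - L)⁻¹) (resolventSet ℂ L) := by
  intro z hz
  rw [spectrum.mem_resolventSet_iff, Algebra.algebraMap_eq_smul_one, isUnit_iff_isUnit_det] at hz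
  refine ((continuousAt_matrix_inv _ ?_).comp (by fun_prop)).continuousWithinAt
  rw [Ring.inverse_eq_inv']
  exact continuousAt_inv₀ hz.ne_zero

variable {L : Matrix n n ℂ} {c : ℂ} {R : ℝ}

theorem circleIntegral_inv_smul_one_sub (hR : 0 < R) (hL : ∀ μ ∈ spectrum ℂ L, ‖μ - c‖ < R) :
    ∮ z in C(c, R), (z • (1 : Matrix n n ℂ) - L)⁻¹ = (2 * π * Complex.I) • (1 : Matrix n n ℂ) := by
  have hM : ∀ μ ∈ spectrum ℂ (L - c • 1), ‖μ‖ < R := by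
    intro μ hμ
    rw [← Algebra.algebraMap_eq_smul_one, ← spectrum.sub_singleton_eq] at hμ
    obtain ⟨ν, hν, _, rfl, rfl⟩ := hμ
    exact hL ν hν
  obtain ⟨r, C, hr, hrR, -, hMpow⟩ := exists_norm_pow_le _ hR hM
  have hne : ∀ z ∈ sphere c R, z - c ≠ 0 := fun z hz =>
    sub_ne_zero.2 (ne_of_mem_sphere hz hR.ne')
  have hbound : ∀ k, ∀ z ∈ sphere c R,
      ‖((z - c) ^ (k + 1))⁻¹ • (L - c • 1) ^ k‖ ≤ C / R * (r / R) ^ k := by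
    intro k z hz
    have h := norm_inv_pow_succ_smul_pow_le hMpow (hne z hz) k
    rwa [mem_sphere_iff_norm.1 hz] at h
  have hgeom : Summable fun k : ℕ => C / R * (r / R) ^ k :=
    (summable_geometric_of_lt_one (by positivity) ((div_lt_one hR).2 hrR)).mul_left _
  have hseries := circleIntegral.hasSum_integral_of_norm_le
    (f := fun k z => ((z - c) ^ (k + 1))⁻¹ • (L - c • 1) ^ k)
    (g := fun z => (z • (1 : Matrix n n ℂ) - L)⁻¹) hR.le
    (fun k => ((continuousOn_id.sub continuousOn_const).pow _).inv₀
      (fun z hz => pow_ne_zero _ (hne z hz)) |>.smul continuousOn_const) hbound hgeom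
    (fun z hz => by
      have hs : Summable fun k : ℕ => ((z - c) ^ (k + 1))⁻¹ • (L - c • 1) ^ k :=
        hgeom.of_norm_bounded fun k => hbound k z hz
      replace hs := hasSum_inv_pow_succ_smul_pow (hne z hz) hs
      rwa [sub_smul, sub_sub_sub_cancel_right] at hs)
  simp only [circleIntegral.integral_smul_const,
    circleIntegral.integral_inv_sub_center_pow_succ c hR.ne', ite_smul, zero_smul] at hseries
  rw [hseries.unique (hasSum_single 0 fun k hk => if_neg hk), if_pos rfl, pow_zero]

theorem circleIntegral_pow_smul_inv_smul_one_sub (hR : 0 < R)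
    (hL : ∀ μ ∈ spectrum ℂ L, ‖μ - c‖ < R) (k : ℕ) :
    ∮ z in C(c, R), z ^ k • (z • (1 : Matrix n n ℂ) - L)⁻¹ = (2 * π * Complex.I) • L ^ k := by
  have hres := spectrum.sphere_subset_resolventSet hL
  have hcont (j : ℕ) :
      ContinuousOn (fun z : ℂ => z ^ j • (z • (1 : Matrix n n ℂ) - L)⁻¹) (sphere c R) :=
    (continuousOn_pow j).smul ((continuousOn_inv_smul_one_sub L).mono hres)
  induction k with
  | zero => simpa using circleIntegral_inv_smul_one_sub hR hL
  | succ k ih =>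
    let T : Matrix n n ℂ →L[ℂ] Matrix n n ℂ :=
      LinearMap.toContinuousLinearMap (LinearMap.mulLeft ℂ L)
    have hstep : Set.EqOn (fun z : ℂ => z ^ (k + 1) • (z • (1 : Matrix n n ℂ) - L)⁻¹)
        (fun z => z ^ k • (1 : Matrix n n ℂ) + T (z ^ k • (z • 1 - L)⁻¹)) (sphere c R) := by
      intro z hz
      have hunit := spectrum.mem_resolventSet_iff.1 (hres hz)
      rw [Algebra.algebraMap_eq_smul_one, isUnit_iff_isUnit_det] at hunit
      have hinv := mul_nonsing_inv _ hunit
      rw [sub_mul, smul_one_mul, sub_eq_iff_eq_add] at hinv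
      simp only [T, LinearMap.coe_toContinuousLinearMap', LinearMap.mulLeft_apply, pow_succ,
        mul_smul, hinv, smul_add, mul_smul_comm]
    have hpow : CircleIntegrable (fun z : ℂ => z ^ k • (1 : Matrix n n ℂ)) c R :=
      ((continuousOn_pow k).smul continuousOn_const).circleIntegrable hR.le
    have hT : CircleIntegrable (fun z => T (z ^ k • (z • 1 - L)⁻¹)) c R :=
      (T.continuous.comp_continuousOn (hcont k)).circleIntegrable hR.le
    rw [circleIntegral.integral_congr hR.le hstep, circleIntegral.integral_add hpow hT,
      circleIntegral.integral_smul_const, circleIntegral.integral_pow, zero_smul, zero_add]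
    refine (T.circleIntegral_comp_comm ((hcont k).circleIntegrable hR.le)).trans ?_
    rw [ih]
    change L * ((2 * π * Complex.I) • L ^ k) = _
    rw [mul_smul_comm, ← pow_succ']

end Matrix

theorem hasSum_phiC (ℓ : ℕ) (z : ℂ) :
    HasSum (fun k : ℕ => z ^ k / ((k + ℓ)! : ℂ)) (phiC ℓ z) := by
  refine (Summable.of_norm_bounded (Real.summable_pow_div_factorial ‖z‖) fun k => ?_).hasSum
  rw [norm_div, norm_pow, Complex.norm_natCast]
  gcongr
  omega

theorem phiMat_eq_circleIntegral {N : ℕ} (ℓ : ℕ) {L : Matrix (Fin N) (Fin N) ℂ} {c : ℂ} {R : ℝ}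
    (hR : 0 < R) (hL : ∀ μ ∈ spectrum ℂ L, ‖μ - c‖ < R) :
    phiMat ℓ L = (2 * π * Complex.I)⁻¹ •
      ∮ z in C(c, R), phiC ℓ z • (z • (1 : Matrix (Fin N) (Fin N) ℂ) - L)⁻¹ := by
  have hres :=
    (Matrix.continuousOn_inv_smul_one_sub L).mono (spectrum.sphere_subset_resolventSet hL)
  obtain ⟨B, hB⟩ := (isCompact_sphere c R).exists_bound_of_continuousOn hres
  have hnorm : ∀ z ∈ sphere c R, ‖z‖ ≤ ‖c‖ + R := fun z hz =>
    (norm_le_norm_add_norm_sub' z c).trans_eq (by rw [mem_sphere_iff_norm.1 hz])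
  have hseries := circleIntegral.hasSum_integral_of_norm_le
    (f := fun k z => (z ^ k / ((k + ℓ)! : ℂ)) • (z • (1 : Matrix (Fin N) (Fin N) ℂ) - L)⁻¹)
    (g := fun z => phiC ℓ z • (z • (1 : Matrix (Fin N) (Fin N) ℂ) - L)⁻¹)
    (u := fun k => (‖c‖ + R) ^ k / k ! * B) hR.le
    (fun k => ((continuousOn_pow k).div_const _).smul hres)
    (fun k z hz => by
      rw [norm_smul, norm_div, norm_pow, Complex.norm_natCast]
      gcongr
      · exact hnorm z hz
      · omega
      · exact hB z hz)
    ((Real.summable_pow_div_factorial _).mul_right B)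
    (fun z _ => (hasSum_phiC ℓ z).smul_const _)
  have hterm (k : ℕ) :
      ∮ z in C(c, R), (z ^ k / ((k + ℓ)! : ℂ)) • (z • (1 : Matrix (Fin N) (Fin N) ℂ) - L)⁻¹ =
        (2 * π * Complex.I) • (((k + ℓ)! : ℂ)⁻¹ • L ^ k) := by
    simp_rw [div_eq_inv_mul, mul_smul (((k + ℓ)! : ℂ)⁻¹)]
    rw [circleIntegral.integral_smul, Matrix.circleIntegral_pow_smul_inv_smul_one_sub hR hL,
      smul_comm]
  simp only [hterm] at hseries
  have hφ := hseries.const_smul (2 * π * Complex.I : ℂ)⁻¹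
  simp only [inv_smul_smul₀ Complex.two_pi_I_ne_zero] at hφ
  exact hφ.tsum_eq

/-- Cauchy-integral representation of `φ_ℓ(L)` over a positively oriented circle of radius `R`
centered at `c` enclosing the spectrum of `L`. -/
theorem phiMat_cauchy_integral {N : ℕ} (ℓ : ℕ) (L : Matrix (Fin N) (Fin N) ℂ)
    (c : ℂ) (R : ℝ) (hR : 0 < R)
    (hspec : ∀ μ ∈ spectrum ℂ L, ‖μ - c‖ < R) :
    phiMat ℓ L = (2 * (π : ℂ) * Complex.I)⁻¹ •
      ∫ θ in (0:ℝ)..(2 * π),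
        (Complex.I * R * Complex.exp (θ * Complex.I) *
            phiC ℓ (c + R * Complex.exp (θ * Complex.I))) •
          ((c + R * Complex.exp (θ * Complex.I)) • (1 : Matrix (Fin N) (Fin N) ℂ) - L)⁻¹ := by
  rw [phiMat_eq_circleIntegral ℓ hR hspec, circleIntegral]
  congr 1
  refine intervalIntegral.integral_congr fun θ _ => ?_
  simp only [deriv_circleMap, circleMap, zero_add, smul_smul]
  congr 1
  ring
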